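/- The explicit matrices X* and Z* for the graph G₆ satisfy rank(X*) = 4 and rank(Z*) = 3; in particular rank(X*) + rank(Z*) = 7, so the pair (X*, Z*) satisfies strict complementarity for the 7×7 Lovász theta SDP of G₆. -/

import Mathlib

/-- The explicit primal optimal solution `X*` of the Lovász theta SDP of `G₆`, with
`f = 1/√5`, `h = 1/(2√5)`, `k = (5 - √5)/10` and `r = (5 - √5)/20`. -/
noncomputable def g6Xstar : Matrix (Fin 7) (Fin 7) ℝ :=
  let f : ℝ := 1 / Real.sqrt 5
  let h : ℝ := 1 / (2 * Real.sqrt 5)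
  let k : ℝ := (5 - Real.sqrt 5) / 10
  let r : ℝ := (5 - Real.sqrt 5) / 20
  !![1, f, f, f, h, f, h;
     f, f, k, 0, 0, k, 0;
     f, k, f, k, 0, 0, 0;
     f, 0, k, f, r, 0, r;
     h, 0, 0, r, h, r, 0;
     f, k, 0, 0, r, f, r;
     h, 0, 0, r, 0, r, h]

/-- The explicit dual optimal solution `Z*` of the Lovász theta SDP of `G₆`, with
`c = (√5 - 1)/2`. -/
noncomputable def g6Zstar : Matrix (Fin 7) (Fin 7) ℝ :=
  let c : ℝ := (Real.sqrt 5 - 1) / 2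
  !![Real.sqrt 5, -1, -1, -1, -1, -1, -1;
     -1, 1, 0, c, c, 0, c;
     -1, 0, 1, 0, c, c, c;
     -1, c, 0, 1, 0, c, 0;
     -1, c, c, 0, 1, 0, 1;
     -1, 0, c, c, 0, 1, 0;
     -1, c, c, 0, 1, 0, 1]

/-! Columns `0, 1, 2, 4` of `X*` (resp. `0, 1, 2` of `Z*`) span its column space, and the
principal minor on these indices is invertible; so the rank is the number of those columns.
Both facts are certified by explicit matrices over `ℚ(√5)`, checked entrywise. -/

namespace Matrix

variable {R m n k : Type*} [CommRing R] [StrongRankCondition R] [Fintype n] [Fintype k]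
  [DecidableEq k]

theorem rank_eq_card_of_mul_submatrix {M : Matrix m n R} (r : k → m) (c : k → n)
    {B : Matrix k n R} {C : Matrix k k R}
    (hcols : M.submatrix id c * B = M) (hinv : M.submatrix r c * C = 1) :
    M.rank = Fintype.card k := by
  apply le_antisymm
  · calc M.rank = (M.submatrix id c * B).rank := by rw [hcols]
      _ ≤ (M.submatrix id c).rank := rank_mul_le_left _ _
      _ ≤ Fintype.card k := rank_le_card_width _
  · calc Fintype.card k = (M.submatrix r c).rank :=
          (rank_of_isUnit _ <| (isUnit_iff_isUnit_det _).mpr <|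
            isUnit_det_of_right_inverse hinv).symm
      _ ≤ M.rank := rank_submatrix_le _ _ _

end Matrix

open Real

noncomputable def g6XstarColumnCoeffs : Matrix (Fin 4) (Fin 7) ℝ :=
  !![1, 0, 0, (√5 - 1) / 2, 0, (√5 - 1) / 2, 1;
     0, 1, 0, -1, 0, (√5 - 1) / 2, (1 - √5) / 2;
     0, 0, 1, (√5 - 1) / 2, 0, -1, (1 - √5) / 2;
     0, 0, 0, 0, 1, 0, -1]

noncomputable def g6XstarMinorInv : Matrix (Fin 4) (Fin 4) ℝ :=
  !![2 * √5, √5 - 5, √5 - 5, -2 * √5;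
     √5 - 5, (7 * √5 - 5) / 2, 2 * √5 - 5, 5 - √5;
     √5 - 5, 2 * √5 - 5, (7 * √5 - 5) / 2, 5 - √5;
     -2 * √5, 5 - √5, 5 - √5, 4 * √5]

noncomputable def g6ZstarColumnCoeffs : Matrix (Fin 3) (Fin 7) ℝ :=
  !![1, 0, 0, -(1 + √5) / 2, 1, -(1 + √5) / 2, 1;
     0, 1, 0, -1, (1 + √5) / 2, -(1 + √5) / 2, (1 + √5) / 2;
     0, 0, 1, -(1 + √5) / 2, (1 + √5) / 2, -1, (1 + √5) / 2]

noncomputable def g6ZstarMinorInv : Matrix (Fin 3) (Fin 3) ℝ :=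
  !![2 + √5, 2 + √5, 2 + √5;
     2 + √5, 3 + √5, 2 + √5;
     2 + √5, 2 + √5, 3 + √5]

lemma sqrt_five_mul_self : √5 * √5 = 5 :=
  Real.mul_self_sqrt (by norm_num)

lemma sqrt_five_inv : (√5)⁻¹ = √5 / 5 := by
  rw [inv_eq_iff_eq_inv, inv_div, div_sqrt]

lemma g6Xstar_submatrix_mul_columnCoeffs :
    g6Xstar.submatrix id ![0, 1, 2, 4] * g6XstarColumnCoeffs = g6Xstar := by
  ext i j
  fin_cases i <;> fin_cases j <;>
    simp [g6Xstar, g6XstarColumnCoeffs, Matrix.mul_apply, Fin.sum_univ_succ, sqrt_five_inv] <;>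
    linarith [sqrt_five_mul_self]

lemma g6Xstar_minor_mul_minorInv :
    g6Xstar.submatrix ![0, 1, 2, 4] ![0, 1, 2, 4] * g6XstarMinorInv = 1 := by
  ext i j
  rw [Matrix.mul_apply]
  fin_cases i <;> fin_cases j <;>
    simp [g6Xstar, g6XstarMinorInv, Fin.sum_univ_succ, sqrt_five_inv] <;>
    linarith [sqrt_five_mul_self]

lemma g6Zstar_submatrix_mul_columnCoeffs :
    g6Zstar.submatrix id ![0, 1, 2] * g6ZstarColumnCoeffs = g6Zstar := by
  ext i j
  fin_cases i <;> fin_cases j <;>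
    simp [g6Zstar, g6ZstarColumnCoeffs, Matrix.mul_apply, Fin.sum_univ_succ] <;>
    linarith [sqrt_five_mul_self]

lemma g6Zstar_minor_mul_minorInv :
    g6Zstar.submatrix ![0, 1, 2] ![0, 1, 2] * g6ZstarMinorInv = 1 := by
  ext i j
  rw [Matrix.mul_apply]
  fin_cases i <;> fin_cases j <;>
    simp [g6Zstar, g6ZstarMinorInv, Fin.sum_univ_succ] <;>
    linarith [sqrt_five_mul_self]

lemma rank_g6Xstar : g6Xstar.rank = 4 :=
  Matrix.rank_eq_card_of_mul_submatrix _ _ g6Xstar_submatrix_mul_columnCoeffs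
    g6Xstar_minor_mul_minorInv

lemma rank_g6Zstar : g6Zstar.rank = 3 :=
  Matrix.rank_eq_card_of_mul_submatrix _ _ g6Zstar_submatrix_mul_columnCoeffs
    g6Zstar_minor_mul_minorInv

theorem g6_strict_complementarity :
    g6Xstar.rank = 4 ∧ g6Zstar.rank = 3 ∧ g6Xstar.rank + g6Zstar.rank = 7 :=
  ⟨rank_g6Xstar, rank_g6Zstar, by rw [rank_g6Xstar, rank_g6Zstar]⟩
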